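/- Under the stated block-operator hypotheses, the subspaces K0 and K1 satisfy: the closure of V*(K0) equals K1, the closure of V(K1) equals K0, V* maps the orthogonal complement of K0 in H0 into the orthogonal complement of K1 in H1, and V maps the orthogonal complement of K1 in H1 into the orthogonal complement of K0 in H0. -/

import Mathlib

open ContinuousLinearMap

variable {H0 H1 : Type*}
  [NormedAddCommGroup H0] [InnerProductSpace ℂ H0] [CompleteSpace H0]
  [NormedAddCommGroup H1] [InnerProductSpace ℂ H1] [CompleteSpace H1]

/-- The (not yet closed) subspace
`{x ∈ ker(A0-λ) ∩ ran V : ∀ n ≥ 0, (V V*)^n x ∈ ker(A0-λ) and V*(V V*)^n x ∈ ker(A1-λ)}`. -/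
noncomputable def K0pre (A0 : H0 →L[ℂ] H0) (A1 : H1 →L[ℂ] H1) (V : H1 →L[ℂ] H0) (lam : ℝ) :
    Submodule ℂ H0 :=
  LinearMap.ker ((A0 - (lam : ℂ) • ContinuousLinearMap.id ℂ H0 : H0 →L[ℂ] H0) : H0 →ₗ[ℂ] H0) ⊓ LinearMap.range (V : H1 →ₗ[ℂ] H0) ⊓
    (⨅ n : ℕ, Submodule.comap
      (((V ∘L ContinuousLinearMap.adjoint V) ^ n : H0 →L[ℂ] H0) : H0 →ₗ[ℂ] H0)
      (LinearMap.ker ((A0 - (lam : ℂ) • ContinuousLinearMap.id ℂ H0 : H0 →L[ℂ] H0) : H0 →ₗ[ℂ] H0))) ⊓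
    (⨅ n : ℕ, Submodule.comap
      ((ContinuousLinearMap.adjoint V ∘L
          ((V ∘L ContinuousLinearMap.adjoint V) ^ n) : H0 →L[ℂ] H1) : H0 →ₗ[ℂ] H1)
      (LinearMap.ker ((A1 - (lam : ℂ) • ContinuousLinearMap.id ℂ H1 : H1 →L[ℂ] H1) : H1 →ₗ[ℂ] H1)))

/-- The subspace `K0`: the closure of `K0pre` in `H0`. -/
noncomputable def K0 (A0 : H0 →L[ℂ] H0) (A1 : H1 →L[ℂ] H1) (V : H1 →L[ℂ] H0) (lam : ℝ) :
    Submodule ℂ H0 :=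
  (K0pre A0 A1 V lam).topologicalClosure

/-- The (not yet closed) subspace
`{y ∈ ker(A1-λ) ∩ ran V* : ∀ n ≥ 0, (V* V)^n y ∈ ker(A1-λ) and V (V* V)^n y ∈ ker(A0-λ)}`. -/
noncomputable def K1pre (A0 : H0 →L[ℂ] H0) (A1 : H1 →L[ℂ] H1) (V : H1 →L[ℂ] H0) (lam : ℝ) :
    Submodule ℂ H1 :=
  LinearMap.ker ((A1 - (lam : ℂ) • ContinuousLinearMap.id ℂ H1 : H1 →L[ℂ] H1) : H1 →ₗ[ℂ] H1) ⊓
    LinearMap.range (ContinuousLinearMap.adjoint V : H0 →ₗ[ℂ] H1) ⊓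
    (⨅ n : ℕ, Submodule.comap
      (((ContinuousLinearMap.adjoint V ∘L V) ^ n : H1 →L[ℂ] H1) : H1 →ₗ[ℂ] H1)
      (LinearMap.ker ((A1 - (lam : ℂ) • ContinuousLinearMap.id ℂ H1 : H1 →L[ℂ] H1) : H1 →ₗ[ℂ] H1))) ⊓
    (⨅ n : ℕ, Submodule.comap
      ((V ∘L ((ContinuousLinearMap.adjoint V ∘L V) ^ n) : H1 →L[ℂ] H0) : H1 →ₗ[ℂ] H0)
      (LinearMap.ker ((A0 - (lam : ℂ) • ContinuousLinearMap.id ℂ H0 : H0 →L[ℂ] H0) : H0 →ₗ[ℂ] H0)))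

/-- The subspace `K1`: the closure of `K1pre` in `H1`. -/
noncomputable def K1 (A0 : H0 →L[ℂ] H0) (A1 : H1 →L[ℂ] H1) (V : H1 →L[ℂ] H0) (lam : ℝ) :
    Submodule ℂ H1 :=
  (K1pre A0 A1 V lam).topologicalClosure


section K0K1aux

variable {A0 : H0 →L[ℂ] H0} {A1 : H1 →L[ℂ] H1} {V : H1 →L[ℂ] H0} {lam : ℝ}

lemma powVVstar_V_aux (V : H1 →L[ℂ] H0) (n : ℕ) (y : H1) :
    ((V ∘L adjoint V) ^ n) (V y) = V (((adjoint V ∘L V) ^ n) y) := by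
  induction n generalizing y with
  | zero => simp
  | succ n ih =>
    rw [pow_succ, mul_apply_eq_comp, pow_succ, mul_apply_eq_comp]
    simp only [comp_apply]
    exact ih (adjoint V (V y))

lemma powVstarV_Vstar_aux (V : H1 →L[ℂ] H0) (n : ℕ) (x : H0) :
    ((adjoint V ∘L V) ^ n) (adjoint V x) = adjoint V (((V ∘L adjoint V) ^ n) x) := by
  induction n generalizing x with
  | zero => simp
  | succ n ih =>
    rw [pow_succ, mul_apply_eq_comp, pow_succ, mul_apply_eq_comp]
    simp only [comp_apply]
    exact ih (V (adjoint V x))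

lemma mem_K0pre_iff {x : H0} :
    x ∈ K0pre A0 A1 V lam ↔
      x ∈ LinearMap.range (V : H1 →ₗ[ℂ] H0) ∧
      (∀ n : ℕ, ((V ∘L adjoint V) ^ n) x
          ∈ LinearMap.ker ((A0 - (lam : ℂ) • ContinuousLinearMap.id ℂ H0 : H0 →L[ℂ] H0) : H0 →ₗ[ℂ] H0)) ∧
      (∀ n : ℕ, adjoint V (((V ∘L adjoint V) ^ n) x)
          ∈ LinearMap.ker ((A1 - (lam : ℂ) • ContinuousLinearMap.id ℂ H1 : H1 →L[ℂ] H1) : H1 →ₗ[ℂ] H1)) := by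
  simp only [K0pre, Submodule.mem_inf, Submodule.mem_iInf, Submodule.mem_comap,
    ContinuousLinearMap.coe_coe, comp_apply]
  constructor
  · rintro ⟨⟨⟨h1, h2⟩, h3⟩, h4⟩; exact ⟨h2, h3, h4⟩
  · rintro ⟨h2, h3, h4⟩
    refine ⟨⟨⟨?_, h2⟩, h3⟩, h4⟩
    simpa using h3 0

lemma mem_K1pre_iff {y : H1} :
    y ∈ K1pre A0 A1 V lam ↔
      y ∈ LinearMap.range (adjoint V : H0 →ₗ[ℂ] H1) ∧
      (∀ n : ℕ, ((adjoint V ∘L V) ^ n) y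
          ∈ LinearMap.ker ((A1 - (lam : ℂ) • ContinuousLinearMap.id ℂ H1 : H1 →L[ℂ] H1) : H1 →ₗ[ℂ] H1)) ∧
      (∀ n : ℕ, V (((adjoint V ∘L V) ^ n) y)
          ∈ LinearMap.ker ((A0 - (lam : ℂ) • ContinuousLinearMap.id ℂ H0 : H0 →L[ℂ] H0) : H0 →ₗ[ℂ] H0)) := by
  simp only [K1pre, Submodule.mem_inf, Submodule.mem_iInf, Submodule.mem_comap,
    ContinuousLinearMap.coe_coe, comp_apply]
  constructor
  · rintro ⟨⟨⟨h1, h2⟩, h3⟩, h4⟩; exact ⟨h2, h3, h4⟩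
  · rintro ⟨h2, h3, h4⟩
    refine ⟨⟨⟨?_, h2⟩, h3⟩, h4⟩
    simpa using h3 0

lemma V_mem_K0pre {y : H1} (hy : y ∈ K1pre A0 A1 V lam) :
    V y ∈ K0pre A0 A1 V lam := by
  rw [mem_K1pre_iff] at hy
  obtain ⟨h2, h3, h4⟩ := hy
  rw [mem_K0pre_iff]
  refine ⟨⟨y, rfl⟩, ?_, ?_⟩
  · intro n
    rw [powVVstar_V_aux]
    exact h4 n
  · intro n
    rw [powVVstar_V_aux]
    have heq : adjoint V (V (((adjoint V ∘L V) ^ n) y))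
        = ((adjoint V ∘L V) ^ (n + 1)) y := by
      rw [pow_succ', mul_apply_eq_comp, comp_apply]
    rw [heq]
    exact h3 (n + 1)

lemma Vstar_mem_K1pre {x : H0} (hx : x ∈ K0pre A0 A1 V lam) :
    adjoint V x ∈ K1pre A0 A1 V lam := by
  rw [mem_K0pre_iff] at hx
  obtain ⟨h2, h3, h4⟩ := hx
  rw [mem_K1pre_iff]
  refine ⟨⟨x, rfl⟩, ?_, ?_⟩
  · intro n
    rw [powVstarV_Vstar_aux]
    exact h4 n
  · intro n
    rw [powVstarV_Vstar_aux]
    have heq : V (adjoint V (((V ∘L adjoint V) ^ n) x))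
        = ((V ∘L adjoint V) ^ (n + 1)) x := by
      rw [pow_succ', mul_apply_eq_comp, comp_apply]
    rw [heq]
    exact h3 (n + 1)

lemma V_mem_K0 {y : H1} (hy : y ∈ K1 A0 A1 V lam) : V y ∈ K0 A0 A1 V lam := by
  have hle : K1 A0 A1 V lam ≤
      Submodule.comap ((V : H1 →L[ℂ] H0) : H1 →ₗ[ℂ] H0) (K0 A0 A1 V lam) := by
    apply Submodule.topologicalClosure_minimal
    · intro z hz
      exact Submodule.mem_comap.2
        (Submodule.le_topologicalClosure _ (V_mem_K0pre hz))
    · exact (Submodule.isClosed_topologicalClosure _).preimage V.continuous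
  exact hle hy

lemma Vstar_mem_K1 {x : H0} (hx : x ∈ K0 A0 A1 V lam) :
    adjoint V x ∈ K1 A0 A1 V lam := by
  have hle : K0 A0 A1 V lam ≤
      Submodule.comap ((adjoint V : H0 →L[ℂ] H1) : H0 →ₗ[ℂ] H1) (K1 A0 A1 V lam) := by
    apply Submodule.topologicalClosure_minimal
    · intro z hz
      exact Submodule.mem_comap.2
        (Submodule.le_topologicalClosure _ (Vstar_mem_K1pre hz))
    · exact (Submodule.isClosed_topologicalClosure _).preimage (adjoint V).continuous
  exact hle hx

lemma K1_le_kerV_orth : K1 A0 A1 V lam ≤ (LinearMap.ker (V : H1 →ₗ[ℂ] H0) : Submodule ℂ H1)ᗮ := by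
  apply Submodule.topologicalClosure_minimal
  · intro y hy
    obtain ⟨x, rfl⟩ := (mem_K1pre_iff.1 hy).1
    rw [Submodule.mem_orthogonal]
    intro w hw
    rw [ContinuousLinearMap.coe_coe, adjoint_inner_right]
    rw [show V w = 0 from LinearMap.mem_ker.mp hw, inner_zero_left]
  · exact Submodule.isClosed_orthogonal _

lemma K0_le_kerVstar_orth :
    K0 A0 A1 V lam ≤ (LinearMap.ker (adjoint V : H0 →ₗ[ℂ] H1) : Submodule ℂ H0)ᗮ := by
  apply Submodule.topologicalClosure_minimal
  · intro x hx
    obtain ⟨y, rfl⟩ := (mem_K0pre_iff.1 hx).1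
    rw [Submodule.mem_orthogonal]
    intro w hw
    rw [ContinuousLinearMap.coe_coe, ← adjoint_inner_left]
    rw [show adjoint V w = 0 from LinearMap.mem_ker.mp hw, inner_zero_left]
  · exact Submodule.isClosed_orthogonal _

end K0K1aux

/-- **Interplay of `K0`, `K1` with `V` and `V*`** (Lemma 5.2):
`closure(V*(K0)) = K1`, `closure(V(K1)) = K0`, and `V*`, `V` map the orthogonal
complements of `K0`, `K1` into the orthogonal complements of `K1`, `K0`. -/
theorem K0_K1_interplay
    {H0 H1 : Type*}
    [NormedAddCommGroup H0] [InnerProductSpace ℂ H0] [CompleteSpace H0]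
    [NormedAddCommGroup H1] [InnerProductSpace ℂ H1] [CompleteSpace H1]
    [TopologicalSpace.SeparableSpace H0] [TopologicalSpace.SeparableSpace H1]
    (A0 : H0 →L[ℂ] H0) (A1 : H1 →L[ℂ] H1) (V : H1 →L[ℂ] H0) (lam : ℝ)
    (hA0 : IsSelfAdjoint A0) (hA1 : IsSelfAdjoint A1)
    (hspec0 : ∀ z ∈ spectrum ℂ A0, z.re ≤ lam)
    (hspec1 : ∀ z ∈ spectrum ℂ A1, lam ≤ z.re) :
    ((K0 A0 A1 V lam).map
        ((ContinuousLinearMap.adjoint V : H0 →L[ℂ] H1) : H0 →ₗ[ℂ] H1)).topologicalClosure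
      = K1 A0 A1 V lam ∧
    ((K1 A0 A1 V lam).map ((V : H1 →L[ℂ] H0) : H1 →ₗ[ℂ] H0)).topologicalClosure
      = K0 A0 A1 V lam ∧
    (∀ x ∈ (K0 A0 A1 V lam)ᗮ, ContinuousLinearMap.adjoint V x ∈ (K1 A0 A1 V lam)ᗮ) ∧
    (∀ y ∈ (K1 A0 A1 V lam)ᗮ, V y ∈ (K0 A0 A1 V lam)ᗮ) := by
  have hNle : ((K0 A0 A1 V lam).map
      ((ContinuousLinearMap.adjoint V : H0 →L[ℂ] H1) : H0 →ₗ[ℂ] H1)).topologicalClosure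
      ≤ K1 A0 A1 V lam := by
    apply Submodule.topologicalClosure_minimal
    · rintro _ ⟨x, hx, rfl⟩
      exact Vstar_mem_K1 hx
    · exact Submodule.isClosed_topologicalClosure _
  have hMle : ((K1 A0 A1 V lam).map ((V : H1 →L[ℂ] H0) : H1 →ₗ[ℂ] H0)).topologicalClosure
      ≤ K0 A0 A1 V lam := by
    apply Submodule.topologicalClosure_minimal
    · rintro _ ⟨y, hy, rfl⟩
      exact V_mem_K0 hy
    · exact Submodule.isClosed_topologicalClosure _
  refine ⟨le_antisymm hNle ?_, le_antisymm hMle ?_, ?_, ?_⟩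
  · -- K1 ≤ closure (V* '' K0)
    set N := ((K0 A0 A1 V lam).map
      ((ContinuousLinearMap.adjoint V : H0 →L[ℂ] H1) : H0 →ₗ[ℂ] H1)).topologicalClosure with hN
    apply Submodule.topologicalClosure_minimal
    · intro y hy
      haveI : CompleteSpace N := (Submodule.isClosed_topologicalClosure _).completeSpace_coe
      set b := y - (Submodule.orthogonalProjectionOnto N y : H1) with hb
      have hbN : b ∈ Nᗮ := Submodule.sub_starProjection_mem_orthogonal y
      have hbK1 : b ∈ K1 A0 A1 V lam :=
        Submodule.sub_mem _ (Submodule.le_topologicalClosure _ hy)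
          (hNle (Submodule.orthogonalProjectionOnto N y).2)
      have hVb : V b ∈ K0 A0 A1 V lam := V_mem_K0 hbK1
      have hTb : adjoint V (V b) ∈ N :=
        Submodule.le_topologicalClosure _ ⟨V b, hVb, rfl⟩
      have h0 : (inner ℂ (adjoint V (V b)) b : ℂ) = 0 :=
        (Submodule.mem_orthogonal _ b).1 hbN _ hTb
      have hVb0 : V b = 0 := by
        have h0' : (inner ℂ b (adjoint V (V b)) : ℂ) = 0 := by
          rw [← inner_conj_symm, h0, map_zero]
        rw [adjoint_inner_right] at h0'
        exact inner_self_eq_zero.mp h0'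
      have hbker : b ∈ LinearMap.ker (V : H1 →ₗ[ℂ] H0) := LinearMap.mem_ker.2 hVb0
      have hb0 : b = 0 := by
        have := (Submodule.mem_orthogonal _ b).1 (K1_le_kerV_orth hbK1) b hbker
        exact inner_self_eq_zero.mp this
      have hy' : y = (Submodule.orthogonalProjectionOnto N y : H1) := by
        rw [← sub_eq_zero]
        exact hb ▸ hb0
      rw [hy']
      exact (Submodule.orthogonalProjectionOnto N y).2
    · exact Submodule.isClosed_topologicalClosure _
  · -- K0 ≤ closure (V '' K1)
    set M := ((K1 A0 A1 V lam).map ((V : H1 →L[ℂ] H0) : H1 →ₗ[ℂ] H0)).topologicalClosure with hM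
    apply Submodule.topologicalClosure_minimal
    · intro x hx
      haveI : CompleteSpace M := (Submodule.isClosed_topologicalClosure _).completeSpace_coe
      set b := x - (Submodule.orthogonalProjectionOnto M x : H0) with hb
      have hbM : b ∈ Mᗮ := Submodule.sub_starProjection_mem_orthogonal x
      have hbK0 : b ∈ K0 A0 A1 V lam :=
        Submodule.sub_mem _ (Submodule.le_topologicalClosure _ hx)
          (hMle (Submodule.orthogonalProjectionOnto M x).2)
      have hVb : adjoint V b ∈ K1 A0 A1 V lam := Vstar_mem_K1 hbK0
      have hTb : V (adjoint V b) ∈ M :=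
        Submodule.le_topologicalClosure _ ⟨adjoint V b, hVb, rfl⟩
      have h0 : (inner ℂ (V (adjoint V b)) b : ℂ) = 0 :=
        (Submodule.mem_orthogonal _ b).1 hbM _ hTb
      have hVb0 : adjoint V b = 0 := by
        have h0' : (inner ℂ b (V (adjoint V b)) : ℂ) = 0 := by
          rw [← inner_conj_symm, h0, map_zero]
        rw [← adjoint_inner_left] at h0'
        exact inner_self_eq_zero.mp h0'
      have hbker : b ∈ LinearMap.ker (adjoint V : H0 →ₗ[ℂ] H1) := LinearMap.mem_ker.2 hVb0
      have hb0 : b = 0 := by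
        have := (Submodule.mem_orthogonal _ b).1 (K0_le_kerVstar_orth hbK0) b hbker
        exact inner_self_eq_zero.mp this
      have hx' : x = (Submodule.orthogonalProjectionOnto M x : H0) := by
        rw [← sub_eq_zero]
        exact hb ▸ hb0
      rw [hx']
      exact (Submodule.orthogonalProjectionOnto M x).2
    · exact Submodule.isClosed_topologicalClosure _
  · intro x hx
    rw [Submodule.mem_orthogonal]
    intro w hw
    rw [adjoint_inner_right]
    exact (Submodule.mem_orthogonal _ x).1 hx _ (V_mem_K0 hw)
  · intro y hy
    rw [Submodule.mem_orthogonal]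
    intro u hu
    rw [← adjoint_inner_left]
    exact (Submodule.mem_orthogonal _ y).1 hy _ (Vstar_mem_K1 hu)
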